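/- Suppose the grid diagram 𝔾₊ is obtained from the grid diagram 𝔾₋ (of the same size) by an O swap. Then there exists an F₂-linear map 𝒫_O : 𝒢̃C(𝔾₊) → 𝒢̃C(𝔾₋) such that 𝒫_O ∘ ∂̃₊ = ∂̃₋ ∘ 𝒫_O, 𝒫_O is homogeneous of Maslov degree −1 (it sends Maslov grading d to Maslov grading d−1), 𝒫_O(F_j 𝒢̃C(𝔾₊)) ⊆ F_{j−s} 𝒢̃C(𝔾₋) for all j, where s = (ℓ(𝔾₊) − ℓ(𝔾₋) + 1)/2 ∈ {0, 1}, and 𝒫_O(x^±(𝔾₊)) = x^±(𝔾₋) for both signs. -/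

import Mathlib

/-!
Grid diagrams, the filtered grid complex over `F₂ = ZMod 2`, its Alexander
filtration, Maslov grading, canonical (Legendrian) grid states, the associated
spectral sequence, and the grid moves (commutation, X:SE/X:NW (de)stabilization,
X swap, O swap, birth).
-/

noncomputable section

open Finset

/-- A grid diagram of size `m`: two permutations recording the rows of the
`O`-markers and the `X`-markers in each column, with no marker collisions. -/
structure GridDiagram (m : ℕ) where
  σO : Equiv.Perm (Fin m)
  σX : Equiv.Perm (Fin m)
  ne : ∀ i, σO i ≠ σX i

namespace Grid

variable {m m' : ℕ}

/-- `I(P,Q)`: the number of pairs `(p, q) ∈ P × Q` with `p₁ < q₁` and `p₂ < q₂`. -/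
def Icount (P Q : Finset (ℚ × ℚ)) : ℕ :=
  ((P ×ˢ Q).filter fun pq => pq.1.1 < pq.2.1 ∧ pq.1.2 < pq.2.2).card

/-- `J(P,Q) = (I(P,Q) + I(Q,P))/2`. -/
def Jcount (P Q : Finset (ℚ × ℚ)) : ℚ := ((Icount P Q : ℚ) + (Icount Q P : ℚ)) / 2

/-- The set of points of a grid state. -/
def ptSet (x : Equiv.Perm (Fin m)) : Finset (ℚ × ℚ) :=
  Finset.univ.image fun i => ((i.val : ℚ), ((x i).val : ℚ))

/-- The set of `O`-markers, as points in the plane. -/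
def Omark (G : GridDiagram m) : Finset (ℚ × ℚ) :=
  Finset.univ.image fun i => ((i.val : ℚ) + 1/2, ((G.σO i).val : ℚ) + 1/2)

/-- The set of `X`-markers, as points in the plane. -/
def Xmark (G : GridDiagram m) : Finset (ℚ × ℚ) :=
  Finset.univ.image fun i => ((i.val : ℚ) + 1/2, ((G.σX i).val : ℚ) + 1/2)

/-- The Maslov function `M = M_𝕆`. -/
def MaslovO (G : GridDiagram m) (x : Equiv.Perm (Fin m)) : ℚ :=
  Jcount (ptSet x) (ptSet x) - 2 * Jcount (ptSet x) (Omark G)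
    + Jcount (Omark G) (Omark G) + 1

/-- The function `M_𝕏`. -/
def MaslovX (G : GridDiagram m) (x : Equiv.Perm (Fin m)) : ℚ :=
  Jcount (ptSet x) (ptSet x) - 2 * Jcount (ptSet x) (Xmark G)
    + Jcount (Xmark G) (Xmark G) + 1

/-- The number `ℓ` of components of the link represented by `G`, i.e. the
number of cycles of `σX⁻¹ ∘ σO` (which has no fixed points). -/
def numComp (G : GridDiagram m) : ℕ := (G.σX⁻¹ * G.σO).cycleType.card

/-- The Alexander function `A(x) = ½(M_𝕆(x) − M_𝕏(x)) − (m − ℓ)/2`. -/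
def Alex (G : GridDiagram m) (x : Equiv.Perm (Fin m)) : ℚ :=
  (MaslovO G x - MaslovX G x) / 2 - ((m : ℚ) - (numComp G : ℚ)) / 2

/-- The half-open cyclic interval `[u, v)` in `Fin m`. -/
def cycInt (u v : Fin m) : Finset (Fin m) :=
  Finset.univ.filter fun w => (w - u).val < (v - u).val

/-- The set of cells of the toroidal rectangle `[i, j) × [a, b)`. -/
def rectCells (i j a b : Fin m) : Finset (Fin m × Fin m) := cycInt i j ×ˢ cycInt a b

/-- The set `Rect(x, y)` of (cell sets of) toroidal rectangles from `x` to `y`. -/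
def Rect (x y : Equiv.Perm (Fin m)) : Set (Finset (Fin m × Fin m)) :=
  { r | ∃ i j : Fin m, i ≠ j ∧ y = x * Equiv.swap i j ∧
      (r = rectCells i j (x i) (x j) ∨ r = rectCells j i (x j) (x i)) }

/-- The cyclically previous index. -/
def prev (k : Fin m) : Fin m := (finRotate m)⁻¹ k

/-- The points of the grid state `x` lying in the interior of the region with
cell set `r`: a lattice point is interior iff all four adjacent cells are in `r`. -/
def intPts (x : Equiv.Perm (Fin m)) (r : Finset (Fin m × Fin m)) : Finset (Fin m) :=
  Finset.univ.filter fun k =>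
    (k, x k) ∈ r ∧ (prev k, x k) ∈ r ∧ (k, prev (x k)) ∈ r ∧ (prev k, prev (x k)) ∈ r

/-- The set `Rect°(x, y)` of empty rectangles from `x` to `y`. -/
def ERect (x y : Equiv.Perm (Fin m)) : Set (Finset (Fin m × Fin m)) :=
  { r | r ∈ Rect x y ∧ intPts x r = ∅ }

/-- The number of `O`-markers in the region `r`, `#(r ∩ 𝕆)`. -/
def countO (G : GridDiagram m) (r : Finset (Fin m × Fin m)) : ℕ :=
  (Finset.univ.filter fun c : Fin m => (c, G.σO c) ∈ r).card

/-- The number of `X`-markers in the region `r`, `#(r ∩ 𝕏)`. -/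
def countX (G : GridDiagram m) (r : Finset (Fin m × Fin m)) : ℕ :=
  (Finset.univ.filter fun c : Fin m => (c, G.σX c) ∈ r).card

/-- The underlying `F₂`-vector space of the filtered grid complex `𝒢̃C(𝔾)`,
with basis the grid states. -/
abbrev GC (m : ℕ) := Equiv.Perm (Fin m) →₀ ZMod 2

/-- The number of empty rectangles from `x` to `y` containing no `O`-marker. -/
def countDRect (G : GridDiagram m) (x y : Equiv.Perm (Fin m)) : ℕ :=
  Nat.card {r : Finset (Fin m × Fin m) // r ∈ ERect x y ∧ countO G r = 0}

/-- The differential `∂̃` of the filtered grid complex, counting empty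
rectangles containing no `O`-marker. -/
def delta (G : GridDiagram m) : GC m →ₗ[ZMod 2] GC m :=
  Finsupp.lsum (ZMod 2) fun x => LinearMap.toSpanSingleton (ZMod 2) (GC m)
    (∑ y : Equiv.Perm (Fin m), (countDRect G x y : ZMod 2) • Finsupp.single y 1)

/-- The Alexander filtration: `F_j` is spanned by the grid states of Alexander
level at most `j`. -/
def Filt (G : GridDiagram m) (j : ℚ) : Submodule (ZMod 2) (GC m) :=
  Submodule.span (ZMod 2)
    {f | ∃ x : Equiv.Perm (Fin m), Alex G x ≤ j ∧ f = Finsupp.single x 1}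

/-- The Maslov-homogeneous part of degree `d` of the grid complex. -/
def MaslovPart (G : GridDiagram m) (d : ℚ) : Submodule (ZMod 2) (GC m) :=
  Submodule.span (ZMod 2)
    {f | ∃ x : Equiv.Perm (Fin m), MaslovO G x = d ∧ f = Finsupp.single x 1}

/-- The canonical grid state `x⁻(𝔾)`, at the lower-left corners of the `X`'s. -/
def xminus (G : GridDiagram m) : Equiv.Perm (Fin m) := G.σX

/-- The canonical grid state `x⁺(𝔾)`, at the upper-right corners of the `X`'s:
`x⁺(i) = σX(i-1) + 1`. -/
def xplus (G : GridDiagram m) : Equiv.Perm (Fin m) :=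
  finRotate m * G.σX * (finRotate m)⁻¹

/-- The numerator of `Z^r_p` for the grid complex. -/
def ZNg (G : GridDiagram m) (r : ℕ) (p : ℚ) : Submodule (ZMod 2) (GC m) :=
  (Filt G p ⊓ Submodule.comap (delta G) (Filt G (p - r))) ⊔ Filt G (p - 1)

/-- The numerator of `B^r_p` for the grid complex. -/
def BNg (G : GridDiagram m) (r : ℕ) (p : ℚ) : Submodule (ZMod 2) (GC m) :=
  (Filt G p ⊓ Submodule.map (delta G) (Filt G (p + r - 1))) ⊔ Filt G (p - 1)

/-- The page `E^r_p` of the spectral sequence of the filtered grid complex. -/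
abbrev EPageG (G : GridDiagram m) (r : ℕ) (p : ℚ) :=
  ↥(ZNg G r p) ⧸
    (Submodule.comap (ZNg G r p).subtype (BNg G r p) : Submodule (ZMod 2) ↥(ZNg G r p))

/-- The class `[f]^r ∈ E^r_p`. -/
def clsG (G : GridDiagram m) (r : ℕ) (p : ℚ) (f : GC m)
    (hf : f ∈ Filt G p ⊓ Submodule.comap (delta G) (Filt G (p - r))) : EPageG G r p :=
  Submodule.Quotient.mk ⟨f, Submodule.mem_sup_left hf⟩

/-- `x` survives to the `i`-th page with `d^i`-obstruction vanishing:
there is a correction term `z ∈ F_{A(x)-1}` with `∂̃(x + z) ∈ F_{A(x)-i}`. -/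
def survives (G : GridDiagram m) (x : Equiv.Perm (Fin m)) (i : ℕ) : Prop :=
  ∃ z ∈ Filt G (Alex G x - 1), delta G (Finsupp.single x 1 + z) ∈ Filt G (Alex G x - i)

/-- The invariant `n(𝔾, x) ∈ ℕ∞`: the smallest `i ≥ 1` such that
`d^i [x]^i ≠ 0`, and `∞` if no such `i` exists. -/
def nInv (G : GridDiagram m) (x : Equiv.Perm (Fin m)) : ℕ∞ :=
  sInf {n : ℕ∞ | ∃ k : ℕ, n = (k : ℕ∞) ∧ 1 ≤ k ∧ ¬ survives G x (k + 1)}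

/-- The invariant `n⁺(𝔾)`. -/
def nPlus (G : GridDiagram m) : ℕ∞ := nInv G (xplus G)

/-- The invariant `n⁻(𝔾)`. -/
def nMinus (G : GridDiagram m) : ℕ∞ := nInv G (xminus G)

/-- `w` is a chain-level representative of the class `λ̃_i = [x]^i` on the `i`-th
page: `w` lies in `F_{A(x)} ∩ ∂̃⁻¹(F_{A(x)-i})` and agrees with `x` modulo
`F_{A(x)-1}`. -/
def IsLambdaRep (G : GridDiagram m) (x : Equiv.Perm (Fin m)) (i : ℕ) (w : GC m) : Prop :=
  w ∈ Filt G (Alex G x) ⊓ Submodule.comap (delta G) (Filt G (Alex G x - i)) ∧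
    w - Finsupp.single x 1 ∈ Filt G (Alex G x - 1)

/-- The class `λ̃_i(𝔾) = [x]^i ∈ E^i_{A(x)}` vanishes. -/
def LambdaVanishes (G : GridDiagram m) (x : Equiv.Perm (Fin m)) (i : ℕ) : Prop :=
  ∃ w : GC m, IsLambdaRep G x i w ∧ w ∈ BNg G i (Alex G x)

/-- The map induced by `Φ` on the `i`-th pages carries the class `[x]^i` at
filtration level `p` to the class `[x']^i` at filtration level `p'`. -/
def MapsLambda (G : GridDiagram m) (G' : GridDiagram m') (Φ : GC m →ₗ[ZMod 2] GC m')
    (i : ℕ) (p p' : ℚ) (x : Equiv.Perm (Fin m)) (x' : Equiv.Perm (Fin m')) : Prop :=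
  ∀ w : GC m, w ∈ Filt G p ⊓ Submodule.comap (delta G) (Filt G (p - i)) →
    w - Finsupp.single x 1 ∈ Filt G (p - 1) →
    ∃ (w' : GC m') (hw' : w' ∈ Filt G' p' ⊓ Submodule.comap (delta G') (Filt G' (p' - i))),
      w' - Finsupp.single x' 1 ∈ Filt G' (p' - 1) ∧
      ∃ hm : Φ w ∈ ZNg G' i p',
        (Submodule.Quotient.mk ⟨Φ w, hm⟩ : EPageG G' i p') = clsG G' i p' w' hw'

/-! ### Grid moves -/

/-- The closed cyclic interval `[u, v]` in `Fin m`. -/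
def ccInt (u v : Fin m) : Finset (Fin m) :=
  Finset.univ.filter fun w => (w - u).val ≤ (v - u).val

/-- The open cyclic interval `(u, v)` in `Fin m`. -/
def ooInt (u v : Fin m) : Finset (Fin m) :=
  Finset.univ.filter fun w => 0 < (w - u).val ∧ (w - u).val < (v - u).val

/-- The closed arcs `[u₁, v₁]` and `[u₂, v₂]` are disjoint, or one is contained
in the interior of the other. -/
def ArcsOK (u₁ v₁ u₂ v₂ : Fin m) : Prop :=
  ccInt u₁ v₁ ∩ ccInt u₂ v₂ = ∅ ∨ ccInt u₁ v₁ ⊆ ooInt u₂ v₂ ∨ ccInt u₂ v₂ ⊆ ooInt u₁ v₁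

/-- Some choice of arcs joining `a₁` to `b₁` and `a₂` to `b₂` is disjoint or
nested (one contained in the interior of the other). -/
def Commutable (a₁ b₁ a₂ b₂ : Fin m) : Prop :=
  ArcsOK a₁ b₁ a₂ b₂ ∨ ArcsOK a₁ b₁ b₂ a₂ ∨ ArcsOK b₁ a₁ a₂ b₂ ∨ ArcsOK b₁ a₁ b₂ a₂

/-- `G₂` is obtained from `G₁` by commuting two adjacent columns. -/
def ColCommutation (G₁ G₂ : GridDiagram m) : Prop :=
  ∃ c c' : Fin m, c'.val = (c.val + 1) % m ∧ c ≠ c' ∧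
    G₂.σO = G₁.σO * Equiv.swap c c' ∧ G₂.σX = G₁.σX * Equiv.swap c c' ∧
    Commutable (G₁.σO c) (G₁.σX c) (G₁.σO c') (G₁.σX c')

/-- `G₂` is obtained from `G₁` by commuting two adjacent rows. -/
def RowCommutation (G₁ G₂ : GridDiagram m) : Prop :=
  ∃ h h' : Fin m, h'.val = (h.val + 1) % m ∧ h ≠ h' ∧
    G₂.σO = Equiv.swap h h' * G₁.σO ∧ G₂.σX = Equiv.swap h h' * G₁.σX ∧
    Commutable (G₁.σO⁻¹ h) (G₁.σX⁻¹ h) (G₁.σO⁻¹ h') (G₁.σX⁻¹ h')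

/-- `G₁` and `G₂` differ by a commutation move. -/
def Commutation (G₁ G₂ : GridDiagram m) : Prop :=
  ColCommutation G₁ G₂ ∨ RowCommutation G₁ G₂

/-- `G₁` is obtained from `G₂` by a stabilization of type `X:SE` at the
`X`-marker in column `c`: the row and column of that `X` are split in two, and
the new `2×2` block (columns `c, c+1`, rows `h, h+1` where `h = σX c`) carries
an `O` in its northwest cell, `X`'s in its northeast and southwest cells, and
its southeast cell is empty; all other markers are unchanged. -/
def StabXSE (G₁ : GridDiagram (m + 1)) (G₂ : GridDiagram m) : Prop :=
  ∃ c : Fin m,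
    (∀ i : Fin m, G₁.σO (c.castSucc.succAbove i) = (G₂.σX c).succ.succAbove (G₂.σO i)) ∧
    G₁.σO c.castSucc = (G₂.σX c).succ ∧
    (∀ i : Fin m, i ≠ c →
      G₁.σX (c.castSucc.succAbove i) = (G₂.σX c).succ.succAbove (G₂.σX i)) ∧
    G₁.σX c.castSucc = (G₂.σX c).castSucc ∧
    G₁.σX c.succ = (G₂.σX c).succ

/-- `G₁` is obtained from `G₂` by a stabilization of type `X:NW`: the new `2×2`
block carries an `O` in its southeast cell, `X`'s in its northeast and southwest
cells, and its northwest cell is empty. -/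
def StabXNW (G₁ : GridDiagram (m + 1)) (G₂ : GridDiagram m) : Prop :=
  ∃ c : Fin m,
    (∀ i : Fin m, G₁.σO (c.succ.succAbove i) = (G₂.σX c).castSucc.succAbove (G₂.σO i)) ∧
    G₁.σO c.succ = (G₂.σX c).castSucc ∧
    (∀ i : Fin m, i ≠ c →
      G₁.σX (c.succ.succAbove i) = (G₂.σX c).castSucc.succAbove (G₂.σX i)) ∧
    G₁.σX c.castSucc = (G₂.σX c).castSucc ∧
    G₁.σX c.succ = (G₂.σX c).succ

/-- `Gp` is obtained from `Gm` by an X swap (pinch move): the diagrams agree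
except in two adjacent rows `h` (lower) and `h' = h+1` (upper), whose four
markers lie in columns `c₁ < c₂ < c₃ < c₄` with at least one column strictly
between `c₂` and `c₃`; both diagrams have `O`'s in the upper row in column `c₁`
and in the lower row in column `c₄`; in `Gm` the `X`'s are at `(c₂, h')` and
`(c₃, h)`, while in `Gp` they are at `(c₃, h')` and `(c₂, h)`. -/
def XSwap (Gp Gm : GridDiagram m) : Prop :=
  ∃ h h' c₁ c₂ c₃ c₄ : Fin m,
    h'.val = h.val + 1 ∧
    c₁ < c₂ ∧ c₂ < c₃ ∧ c₃ < c₄ ∧ c₂.val + 1 < c₃.val ∧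
    Gp.σO = Gm.σO ∧
    Gm.σO c₁ = h' ∧ Gm.σO c₄ = h ∧
    Gm.σX c₂ = h' ∧ Gm.σX c₃ = h ∧
    Gp.σX = Gm.σX * Equiv.swap c₂ c₃

/-- `Gp` is obtained from `Gm` by an O swap (pinch move): as in `XSwap`, with
the roles of the `X`- and `O`-markers exchanged. -/
def OSwap (Gp Gm : GridDiagram m) : Prop :=
  ∃ h h' c₁ c₂ c₃ c₄ : Fin m,
    h'.val = h.val + 1 ∧
    c₁ < c₂ ∧ c₂ < c₃ ∧ c₃ < c₄ ∧ c₂.val + 1 < c₃.val ∧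
    Gp.σX = Gm.σX ∧
    Gm.σX c₁ = h' ∧ Gm.σX c₄ = h ∧
    Gm.σO c₂ = h' ∧ Gm.σO c₃ = h ∧
    Gp.σO = Gm.σO * Equiv.swap c₂ c₃

/-- The column re-indexing for a birth move at column `c`: two new columns are
inserted immediately to the right of column `c`. -/
def insCol (c i : Fin m) : Fin (m + 2) :=
  if i.val ≤ c.val then ⟨i.val, by have := i.isLt; omega⟩
  else ⟨i.val + 2, by have := i.isLt; omega⟩

/-- The row re-indexing for a birth move at the `O` in row `g`: two new rows are
inserted immediately below row `g`. -/
def insRow (g j : Fin m) : Fin (m + 2) :=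
  if j.val < g.val then ⟨j.val, by have := j.isLt; omega⟩
  else ⟨j.val + 2, by have := j.isLt; omega⟩

/-- `Gp` is obtained from `Gm` by a birth move: directly to the bottom-right of
the `O`-marker at `(c, g)` (`g = σO c`), two new adjacent columns `c+1, c+2` and
two new adjacent rows `g, g+1` are inserted, whose new `2×2` block carries
`O`-markers in its northwest `(c+1, g+1)` and southeast `(c+2, g)` cells and
`X`-markers in its northeast `(c+2, g+1)` and southwest `(c+1, g)` cells; all
other markers are unchanged. -/
def Birth (Gp : GridDiagram (m + 2)) (Gm : GridDiagram m) : Prop :=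
  ∃ c : Fin m,
    (∀ i : Fin m, Gp.σO (insCol c i) = insRow (Gm.σO c) (Gm.σO i)) ∧
    Gp.σO ⟨c.val + 1, by have := c.isLt; omega⟩ =
      ⟨(Gm.σO c).val + 1, by have := (Gm.σO c).isLt; omega⟩ ∧
    Gp.σO ⟨c.val + 2, by have := c.isLt; omega⟩ =
      ⟨(Gm.σO c).val, by have := (Gm.σO c).isLt; omega⟩ ∧
    (∀ i : Fin m, Gp.σX (insCol c i) = insRow (Gm.σO c) (Gm.σX i)) ∧
    Gp.σX ⟨c.val + 1, by have := c.isLt; omega⟩ =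
      ⟨(Gm.σO c).val, by have := (Gm.σO c).isLt; omega⟩ ∧
    Gp.σX ⟨c.val + 2, by have := c.isLt; omega⟩ =
      ⟨(Gm.σO c).val + 1, by have := (Gm.σO c).isLt; omega⟩

/-- A finite sequence of commutations and `X:SE`/`X:NW` (de)stabilizations
joining two grid diagrams (so that they represent the same Legendrian link). -/
inductive LegSeq : (Σ m : ℕ, GridDiagram m) → (Σ m : ℕ, GridDiagram m) → Prop
  | refl (X : Σ m : ℕ, GridDiagram m) : LegSeq X X
  | comm {m : ℕ} {G₁ G₂ : GridDiagram m} {Y : Σ m : ℕ, GridDiagram m}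
      (h : Commutation G₁ G₂) (tail : LegSeq ⟨m, G₂⟩ Y) : LegSeq ⟨m, G₁⟩ Y
  | stab {m : ℕ} {G₁ : GridDiagram (m + 1)} {G₂ : GridDiagram m} {Y : Σ m : ℕ, GridDiagram m}
      (h : StabXSE G₁ G₂ ∨ StabXNW G₁ G₂) (tail : LegSeq ⟨m + 1, G₁⟩ Y) :
      LegSeq ⟨m, G₂⟩ Y
  | destab {m : ℕ} {G₁ : GridDiagram (m + 1)} {G₂ : GridDiagram m} {Y : Σ m : ℕ, GridDiagram m}
      (h : StabXSE G₁ G₂ ∨ StabXNW G₁ G₂) (tail : LegSeq ⟨m, G₂⟩ Y) :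
      LegSeq ⟨m + 1, G₁⟩ Y

/-- `CobSeq X Y P B`: a finite sequence of moves from the grid diagram `X`
(playing the role of `𝔾₊`) down to `Y` (playing the role of `𝔾₋`), each step
being a commutation, an `X:SE`/`X:NW` stabilization or destabilization, an
X swap or O swap (a pinch), or a birth, with `P` pinch steps and `B` birth
steps; this is the combinatorial counterpart of a decomposable Lagrangian
cobordism from the Legendrian link of `Y` to that of `X`. -/
inductive CobSeq :
    (Σ m : ℕ, GridDiagram m) → (Σ m : ℕ, GridDiagram m) → ℕ → ℕ → Prop
  | refl (X : Σ m : ℕ, GridDiagram m) : CobSeq X X 0 0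
  | comm {m : ℕ} {G₁ G₂ : GridDiagram m} {Y : Σ m : ℕ, GridDiagram m} {P B : ℕ}
      (h : Commutation G₁ G₂) (tail : CobSeq ⟨m, G₂⟩ Y P B) : CobSeq ⟨m, G₁⟩ Y P B
  | stab {m : ℕ} {G₁ : GridDiagram (m + 1)} {G₂ : GridDiagram m}
      {Y : Σ m : ℕ, GridDiagram m} {P B : ℕ}
      (h : StabXSE G₁ G₂ ∨ StabXNW G₁ G₂) (tail : CobSeq ⟨m + 1, G₁⟩ Y P B) :
      CobSeq ⟨m, G₂⟩ Y P B
  | destab {m : ℕ} {G₁ : GridDiagram (m + 1)} {G₂ : GridDiagram m}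
      {Y : Σ m : ℕ, GridDiagram m} {P B : ℕ}
      (h : StabXSE G₁ G₂ ∨ StabXNW G₁ G₂) (tail : CobSeq ⟨m, G₂⟩ Y P B) :
      CobSeq ⟨m + 1, G₁⟩ Y P B
  | xswap {m : ℕ} {Gp Gm : GridDiagram m} {Y : Σ m : ℕ, GridDiagram m} {P B : ℕ}
      (h : XSwap Gp Gm) (tail : CobSeq ⟨m, Gm⟩ Y P B) : CobSeq ⟨m, Gp⟩ Y (P + 1) B
  | oswap {m : ℕ} {Gp Gm : GridDiagram m} {Y : Σ m : ℕ, GridDiagram m} {P B : ℕ}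
      (h : OSwap Gp Gm) (tail : CobSeq ⟨m, Gm⟩ Y P B) : CobSeq ⟨m, Gp⟩ Y (P + 1) B
  | birth {m : ℕ} {Gp : GridDiagram (m + 2)} {Gm : GridDiagram m}
      {Y : Σ m : ℕ, GridDiagram m} {P B : ℕ}
      (h : Birth Gp Gm) (tail : CobSeq ⟨m, Gm⟩ Y P B) : CobSeq ⟨m + 2, Gp⟩ Y P (B + 1)

end Grid

/-!
`𝒫_O` is the identity on the grid states that have no point on the segment of the line between
the two swapped rows joining the two `O`'s, and kills the others (the pinched states). A rectangle
between two unpinched states contains an `O` of `𝔾₊` iff it contains one of `𝔾₋`; a rectangle from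
an unpinched to a pinched state contains an `O` of `𝔾₋`, and one from a pinched to an unpinched
state an `O` of `𝔾₊`: so `𝒫_O` is a chain map. Moving the two `O`'s raises `J(𝕆, 𝕆)` by one and
leaves `J(x, 𝕆)` unchanged for unpinched `x`, which gives the Maslov and Alexander shifts; the
canonical states are unpinched and the same in both diagrams. Finally `σ_X⁻¹ σ_O` gets multiplied
by a transposition, which changes its number of cycles by one.
-/

namespace Equiv.Perm

variable {α : Type*} [DecidableEq α]

theorem mul_swap_inv_apply (x : Perm α) (i j k : α) :
    (x * swap i j)⁻¹ k = swap i j (x⁻¹ k) := by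
  rw [mul_inv_rev, swap_inv, mul_apply]

variable [Fintype α]

theorem card_cycleFactorsFinset_mul_swap_le {σ : Perm α} {a : α} (ha : σ a ≠ a) (b : α) :
    #(σ * swap a b).cycleFactorsFinset ≤ #σ.cycleFactorsFinset + 1 := by
  set τ := σ * swap a b
  have hmem : σ.cycleOf a ∈ σ.cycleFactorsFinset :=
    cycleOf_mem_cycleFactorsFinset_iff.2 (mem_support.2 ha)
  -- a cycle of `τ` avoiding `a` and `b` is a cycle of `σ`, as `τ = σ` off `{a, b}`
  have hsub : τ.cycleFactorsFinset ⊆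
      insert (τ.cycleOf a) (insert (τ.cycleOf b) (σ.cycleFactorsFinset.erase (σ.cycleOf a))) := by
    intro f hf
    by_cases hfa : a ∈ f.support
    · exact mem_insert.2 (Or.inl (cycle_is_cycleOf hfa hf))
    by_cases hfb : b ∈ f.support
    · exact mem_insert_of_mem (mem_insert.2 (Or.inl (cycle_is_cycleOf hfb hf)))
    refine mem_insert_of_mem (mem_insert_of_mem (mem_erase.2 ⟨?_, ?_⟩))
    · rintro rfl
      exact hfa (mem_support_cycleOf_iff.2 ⟨SameCycle.refl _ _, mem_support.2 ha⟩)
    · rw [mem_cycleFactorsFinset_iff] at hf ⊢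
      refine ⟨hf.1, fun x hx => ?_⟩
      rw [hf.2 x hx, mul_apply, swap_apply_of_ne_of_ne (ne_of_mem_of_not_mem hx hfa)
        (ne_of_mem_of_not_mem hx hfb)]
  have := (card_le_card hsub).trans <| (card_insert_le _ _).trans <|
    Nat.succ_le_succ (card_insert_le _ _)
  rw [card_erase_of_mem hmem] at this
  have := card_pos.2 ⟨_, hmem⟩
  omega

theorem card_cycleType_mul_swap {σ : Perm α} {a b : α} (hab : a ≠ b) (hσ : ∀ x, σ x ≠ x)
    (hτ : ∀ x, (σ * swap a b) x ≠ x) :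
    Multiset.card (σ * swap a b).cycleType = Multiset.card σ.cycleType + 1 ∨
      Multiset.card σ.cycleType = Multiset.card (σ * swap a b).cycleType + 1 := by
  have hcard : ∀ f : Perm α, Multiset.card f.cycleType = #f.cycleFactorsFinset := fun f => by
    rw [cycleType_def, Multiset.card_map]; rfl
  have hup := card_cycleFactorsFinset_mul_swap_le (hσ a) b
  have hdown := card_cycleFactorsFinset_mul_swap_le (hτ a) b
  rw [mul_swap_mul_self] at hdown
  have hsign : ∀ f : Perm α, (∀ x, f x ≠ x) →
      sign f = (-1 : ℤˣ) ^ (Fintype.card α + Multiset.card f.cycleType) := fun f hf => by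
    rw [sign_of_cycleType, sum_cycleType, eq_univ_of_forall fun x => mem_support.2 (hf x),
      card_univ]
  have hflip : sign (σ * swap a b) = -sign σ := by rw [sign_mul, sign_swap hab, mul_neg_one]
  rw [hsign _ hτ, hsign _ hσ, hcard, hcard] at hflip
  rw [hcard, hcard]
  -- the two cycle counts differ by at most one and have different parities
  rcases Nat.even_or_odd (Fintype.card α + #(σ * swap a b).cycleFactorsFinset) with h₁ | h₁ <;>
  rcases Nat.even_or_odd (Fintype.card α + #σ.cycleFactorsFinset) with h₂ | h₂ <;>
  simp only [h₁.neg_one_pow, h₂.neg_one_pow, neg_neg] at hflip <;>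
  first
  | exact absurd hflip (by decide)
  | (obtain ⟨r, hr⟩ := h₁; obtain ⟨s, hs⟩ := h₂; omega)

theorem filter_lt_mul_swap {m : ℕ} {σ : Perm (Fin m)} {c₂ c₃ : Fin m} (hc : c₂ < c₃)
    (hσ : (σ c₂).val = (σ c₃).val + 1) :
    univ.filter (fun p : Fin m × Fin m =>
        p.1 < p.2 ∧ (σ * swap c₂ c₃) p.1 < (σ * swap c₂ c₃) p.2) =
      insert (c₂, c₃) (univ.filter fun p : Fin m × Fin m => p.1 < p.2 ∧ σ p.1 < σ p.2) := by
  have hval : ∀ e, (e = c₂ ∧ σ (swap c₂ c₃ e) = σ c₃ ∧ σ e = σ c₂) ∨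
      (e = c₃ ∧ σ (swap c₂ c₃ e) = σ c₂ ∧ σ e = σ c₃) ∨
      (e ≠ c₂ ∧ e ≠ c₃ ∧ σ (swap c₂ c₃ e) = σ e ∧ σ e ≠ σ c₂ ∧ σ e ≠ σ c₃) := by
    intro e
    rcases eq_or_ne e c₂ with rfl | h₂
    · simp
    rcases eq_or_ne e c₃ with rfl | h₃
    · simp
    exact Or.inr (Or.inr ⟨h₂, h₃, by rw [swap_apply_of_ne_of_ne h₂ h₃], σ.injective.ne h₂,
      σ.injective.ne h₃⟩)
  ext ⟨c, d⟩
  rw [mem_insert, mem_filter, mem_filter]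
  simp only [mem_univ, true_and, Prod.mk.injEq, Perm.mul_apply]
  have := hval c; have := hval d
  omega

end Equiv.Perm

namespace Grid

open Equiv

variable {m : ℕ}

theorem mem_cycInt {u v w : Fin m} :
    w ∈ cycInt u v ↔ if u ≤ v then u ≤ w ∧ w < v else u ≤ w ∨ w < v := by
  have hsub (a b : Fin m) :
      ((a - b : Fin m) : ℕ) = if b ≤ a then a.val - b.val else m + a - b := by
    split_ifs with h
    exacts [Fin.sub_val_of_le h, Fin.coe_sub_iff_lt.2 (not_le.1 h)]
  have := w.isLt; have := v.isLt
  simp only [cycInt, mem_filter, mem_univ, true_and, hsub]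
  split_ifs <;> omega

theorem mem_rectCells {i j a b : Fin m} {p : Fin m × Fin m} :
    p ∈ rectCells i j a b ↔ p.1 ∈ cycInt i j ∧ p.2 ∈ cycInt a b :=
  mem_product

theorem exists_eq_rectCells_of_mem_Rect {x y : Perm (Fin m)} {r : Finset (Fin m × Fin m)}
    (hr : r ∈ Rect x y) : ∃ i j, i ≠ j ∧ y = x * swap i j ∧ r = rectCells i j (x i) (x j) := by
  obtain ⟨i, j, hij, hy, hr | hr⟩ := hr
  · exact ⟨i, j, hij, hy, hr⟩
  · exact ⟨j, i, hij.symm, by rwa [swap_comm], hr⟩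

/-- A rectangle from `x` to `y` meets the rows `h` and `h' = h + 1` in the same columns, or has
its bottom edge, or its top edge, on the horizontal line at height `h'` between them. -/
theorem Rect.rows {h h' : Fin m} (hrow : h'.val = h.val + 1) {x y : Perm (Fin m)}
    {r : Finset (Fin m × Fin m)} (hr : r ∈ Rect x y) :
    (y⁻¹ h' = x⁻¹ h' ∧ ∀ c, (c, h) ∈ r ↔ (c, h') ∈ r) ∨
      (∀ c, (c, h) ∉ r ∧ ((c, h') ∈ r ↔ c ∈ cycInt (x⁻¹ h') (y⁻¹ h'))) ∨
      (∀ c, (c, h') ∉ r ∧ ((c, h) ∈ r ↔ c ∈ cycInt (y⁻¹ h') (x⁻¹ h'))) := by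
  obtain ⟨i, j, hij, rfl, rfl⟩ := exists_eq_rectCells_of_mem_Rect hr
  have hxij : x i ≠ x j := x.injective.ne hij
  simp only [mem_rectCells, Perm.mul_swap_inv_apply]
  by_cases hi : h' = x i
  · have hmem' : h' ∈ cycInt (x i) (x j) := by rw [mem_cycInt]; split_ifs <;> omega
    have hmem : h ∉ cycInt (x i) (x j) := by rw [mem_cycInt]; split_ifs <;> omega
    rw [Perm.inv_eq_iff_eq.2 hi, swap_apply_left]
    exact Or.inr (Or.inl fun c => by simp [hmem, hmem'])
  by_cases hj : h' = x j
  · have hmem' : h' ∉ cycInt (x i) (x j) := by rw [mem_cycInt]; split_ifs <;> omega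
    have hmem : h ∈ cycInt (x i) (x j) := by rw [mem_cycInt]; split_ifs <;> omega
    rw [Perm.inv_eq_iff_eq.2 hj, swap_apply_right]
    exact Or.inr (Or.inr fun c => by simp [hmem, hmem'])
  have hrows : h ∈ cycInt (x i) (x j) ↔ h' ∈ cycInt (x i) (x j) := by
    rw [mem_cycInt, mem_cycInt]; split_ifs <;> omega
  refine Or.inl ⟨swap_apply_of_ne_of_ne ?_ ?_, fun c => by rw [hrows]⟩ <;>
    rwa [Ne, Perm.inv_eq_iff_eq]

theorem countO_eq_zero_iff {G : GridDiagram m} {r : Finset (Fin m × Fin m)} :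
    countO G r = 0 ↔ ∀ c, (c, G.σO c) ∉ r := by
  simp [countO, filter_eq_empty_iff]

theorem countO_ne_zero_of_mem {G : GridDiagram m} {r : Finset (Fin m × Fin m)} {c : Fin m}
    (hc : (c, G.σO c) ∈ r) : countO G r ≠ 0 :=
  fun h => countO_eq_zero_iff.1 h c hc

theorem countO_eq_zero_iff_of_swap {G G' : GridDiagram m} {a b : Fin m}
    (hσ : G'.σO = G.σO * swap a b) {r : Finset (Fin m × Fin m)}
    (hab : (a, G'.σO a) ∈ r ∨ (b, G'.σO b) ∈ r ↔ (a, G.σO a) ∈ r ∨ (b, G.σO b) ∈ r) :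
    countO G' r = 0 ↔ countO G r = 0 := by
  have hsplit : ∀ G : GridDiagram m, countO G r = 0 ↔
      (∀ c, c ≠ a → c ≠ b → (c, G.σO c) ∉ r) ∧ ¬((a, G.σO a) ∈ r ∨ (b, G.σO b) ∈ r) := by
    intro G
    rw [countO_eq_zero_iff]
    refine ⟨fun H => ⟨fun c _ _ => H c, by rintro (h | h) <;> exact H _ h⟩, ?_⟩
    rintro ⟨H, Hab⟩ c
    by_cases ha : c = a
    · exact ha ▸ fun h => Hab (Or.inl h)
    by_cases hb : c = b
    · exact hb ▸ fun h => Hab (Or.inr h)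
    exact H c ha hb
  rw [hsplit, hsplit, hab]
  refine and_congr_left' <|
    forall_congr' fun c => forall_congr' fun ha => forall_congr' fun hb => ?_
  rw [hσ, Perm.mul_apply, swap_apply_of_ne_of_ne ha hb]

theorem countDRect_congr {G G' : GridDiagram m} {x y : Perm (Fin m)}
    (h : ∀ r ∈ Rect x y, countO G r = 0 ↔ countO G' r = 0) :
    countDRect G x y = countDRect G' x y :=
  Nat.card_congr <| Equiv.subtypeEquivRight fun r =>
    ⟨fun hr => ⟨hr.1, (h r hr.1.1).1 hr.2⟩, fun hr => ⟨hr.1, (h r hr.1.1).2 hr.2⟩⟩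

theorem countDRect_eq_zero {G : GridDiagram m} {x y : Perm (Fin m)}
    (h : ∀ r ∈ Rect x y, countO G r ≠ 0) : countDRect G x y = 0 :=
  @Nat.card_of_isEmpty _ ⟨fun r => h r.1 r.2.1.1 r.2.2⟩

def killStates (B : Perm (Fin m) → Prop) [DecidablePred B] : GC m →ₗ[ZMod 2] GC m :=
  Finsupp.lsum (ZMod 2) fun x =>
    LinearMap.toSpanSingleton (ZMod 2) (GC m) (if B x then 0 else Finsupp.single x 1)

theorem killStates_single (B : Perm (Fin m) → Prop) [DecidablePred B] (x : Perm (Fin m)) :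
    killStates B (Finsupp.single x 1) = if B x then 0 else Finsupp.single x 1 := by
  rw [killStates, Finsupp.lsum_single, LinearMap.toSpanSingleton_apply, one_smul]

theorem delta_single (G : GridDiagram m) (x : Perm (Fin m)) :
    delta G (Finsupp.single x 1) = ∑ y, (countDRect G x y : ZMod 2) • Finsupp.single y 1 := by
  rw [delta, Finsupp.lsum_single, LinearMap.toSpanSingleton_apply, one_smul]

theorem killStates_comp_delta {G G' : GridDiagram m}
    (B : Perm (Fin m) → Prop) [DecidablePred B]
    (h₁ : ∀ x y, ¬B x → ¬B y → (countDRect G x y : ZMod 2) = countDRect G' x y)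
    (h₂ : ∀ x y, ¬B x → B y → (countDRect G' x y : ZMod 2) = 0)
    (h₃ : ∀ x y, B x → ¬B y → (countDRect G x y : ZMod 2) = 0) :
    (killStates B).comp (delta G) = (delta G').comp (killStates B) := by
  refine Finsupp.lhom_ext' fun x => LinearMap.ext_ring ?_
  simp only [LinearMap.comp_apply, Finsupp.lsingle_apply, delta_single, map_sum, map_smul,
    killStates_single]
  by_cases hx : B x
  · rw [if_pos hx, map_zero]
    refine sum_eq_zero fun y _ => ?_
    by_cases hy : B y
    · rw [if_pos hy, smul_zero]
    · rw [h₃ x y hx hy, zero_smul]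
  · rw [if_neg hx, delta_single]
    refine sum_congr rfl fun y _ => ?_
    by_cases hy : B y
    · rw [if_pos hy, h₂ x y hx hy, zero_smul, smul_zero]
    · rw [if_neg hy, h₁ x y hx hy]

theorem map_killStates_span_le (B : Perm (Fin m) → Prop) [DecidablePred B]
    {p q : Perm (Fin m) → Prop} (h : ∀ x, ¬B x → p x → q x) :
    (Submodule.span (ZMod 2) {f | ∃ x, p x ∧ f = Finsupp.single x 1}).map (killStates B) ≤
      Submodule.span (ZMod 2) {f | ∃ x, q x ∧ f = Finsupp.single x 1} := by
  rw [Submodule.map_span, Submodule.span_le]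
  rintro _ ⟨_, ⟨x, hx, rfl⟩, rfl⟩
  rw [SetLike.mem_coe, killStates_single]
  split_ifs with hB
  · exact zero_mem _
  · exact Submodule.subset_span ⟨x, h x hB hx, rfl⟩

theorem Icount_image_univ {f g : Fin m → ℚ × ℚ} (hf : Function.Injective f)
    (hg : Function.Injective g) :
    Icount (univ.image f) (univ.image g) =
      #{p : Fin m × Fin m | (f p.1).1 < (g p.2).1 ∧ (f p.1).2 < (g p.2).2} := by
  rw [Icount, ← prodMap_image_product, filter_image, card_image_of_injective _ (hf.prodMap hg),
    univ_product_univ]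
  rfl

theorem natCast_lt_natCast_add_half {a b : ℕ} : (a : ℚ) < b + 1 / 2 ↔ a ≤ b := by
  constructor <;> intro h
  · by_contra hab
    have : (b : ℚ) + 1 ≤ a := by exact_mod_cast not_le.1 hab
    linarith
  · have : (a : ℚ) ≤ b := by exact_mod_cast h
    linarith

theorem natCast_add_half_lt_natCast {a b : ℕ} : (a : ℚ) + 1 / 2 < b ↔ a < b := by
  constructor <;> intro h
  · by_contra hab
    have : (b : ℚ) ≤ a := by exact_mod_cast not_lt.1 hab
    linarith
  · have : (a : ℚ) + 1 ≤ b := by exact_mod_cast h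
    linarith

theorem injective_marker (σ : Perm (Fin m)) :
    Function.Injective fun i : Fin m => ((i.val : ℚ) + 1 / 2, ((σ i).val : ℚ) + 1 / 2) :=
  fun u v huv => Fin.ext (by simpa using congrArg Prod.fst huv)

/-- Twice the contribution of an `O` in the cell `(c, k)` to `J(x, 𝕆)`. -/
def oWeight (x : Perm (Fin m)) (c k : Fin m) : ℚ :=
  ∑ u, ((if u ≤ c ∧ x u ≤ k then 1 else 0) + (if c < u ∧ k < x u then 1 else 0))

theorem two_mul_Jcount_ptSet_Omark (G : GridDiagram m) (x : Perm (Fin m)) :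
    2 * Jcount (ptSet x) (Omark G) = ∑ c, oWeight x c (G.σO c) := by
  have hpt : Function.Injective fun i : Fin m => ((i.val : ℚ), ((x i).val : ℚ)) :=
    fun u v huv => Fin.ext (by simpa using congrArg Prod.fst huv)
  rw [Jcount, mul_div_cancel₀ _ two_ne_zero, ptSet, Omark,
    Icount_image_univ hpt (injective_marker G.σO), Icount_image_univ (injective_marker G.σO) hpt]
  simp only [natCast_lt_natCast_add_half, natCast_add_half_lt_natCast, Fin.val_fin_le,
    Fin.val_fin_lt, card_filter, Fintype.sum_prod_type, oWeight, sum_add_distrib]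
  push_cast
  rw [sum_comm]

theorem oWeight_sub_of_val_eq_succ {x : Perm (Fin m)} {c k k' : Fin m}
    (hk : k'.val = k.val + 1) :
    oWeight x c k' - oWeight x c k =
      (if x⁻¹ k' ≤ c then 1 else 0) - (if c < x⁻¹ k' then 1 else 0) := by
  rw [oWeight, oWeight, ← sum_sub_distrib, Fintype.sum_eq_single (x⁻¹ k')]
  · simp only [Perm.coe_inv, apply_symm_apply]
    split_ifs <;> norm_num <;> omega
  · intro u hu
    have : x u ≠ k' := fun e => hu (Perm.eq_inv_iff_eq.2 e)
    split_ifs <;> norm_num <;> omega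

theorem Jcount_Omark_self (G : GridDiagram m) :
    Jcount (Omark G) (Omark G) = #{p : Fin m × Fin m | p.1 < p.2 ∧ G.σO p.1 < G.σO p.2} := by
  rw [Jcount, add_self_div_two, Omark,
    Icount_image_univ (injective_marker G.σO) (injective_marker G.σO)]
  simp only [add_lt_add_iff_right, Nat.cast_lt, Fin.val_fin_lt]

structure OSwapAt (Gp Gm : GridDiagram m) (h h' c₂ c₃ : Fin m) : Prop where
  succ_row : h'.val = h.val + 1
  lt : c₂ < c₃
  σO_minus_c₂ : Gm.σO c₂ = h'
  σO_minus_c₃ : Gm.σO c₃ = h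
  σO_plus : Gp.σO = Gm.σO * swap c₂ c₃
  σX_plus : Gp.σX = Gm.σX

/-- The point of `x` at height `h'` lies strictly between the abscissae `c₂ + ½` and
`c₃ + ½` of the two swapped `O`'s. -/
def Pinched (h' c₂ c₃ : Fin m) (x : Perm (Fin m)) : Prop := c₂ < x⁻¹ h' ∧ x⁻¹ h' ≤ c₃

instance (h' c₂ c₃ : Fin m) : DecidablePred (Pinched h' c₂ c₃) :=
  fun _ => inferInstanceAs (Decidable (_ ∧ _))

namespace OSwapAt

variable {Gp Gm : GridDiagram m} {h h' c₂ c₃ : Fin m}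

theorem σO_plus_c₂ (hs : OSwapAt Gp Gm h h' c₂ c₃) : Gp.σO c₂ = h := by
  rw [hs.σO_plus, Perm.mul_apply, swap_apply_left, hs.σO_minus_c₃]

theorem σO_plus_c₃ (hs : OSwapAt Gp Gm h h' c₂ c₃) : Gp.σO c₃ = h' := by
  rw [hs.σO_plus, Perm.mul_apply, swap_apply_right, hs.σO_minus_c₂]

theorem countO_plus_eq_zero_iff (hs : OSwapAt Gp Gm h h' c₂ c₃) {x y : Perm (Fin m)}
    (hx : ¬Pinched h' c₂ c₃ x) (hy : ¬Pinched h' c₂ c₃ y) {r : Finset (Fin m × Fin m)}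
    (hr : r ∈ Rect x y) : countO Gp r = 0 ↔ countO Gm r = 0 := by
  refine countO_eq_zero_iff_of_swap hs.σO_plus ?_
  rw [hs.σO_plus_c₂, hs.σO_plus_c₃, hs.σO_minus_c₂, hs.σO_minus_c₃]
  unfold Pinched at hx hy
  have := hs.lt
  rcases Rect.rows hs.succ_row hr with ⟨-, hrows⟩ | hrows | hrows
  · simp only [hrows]
  · have hcol : c₂ ∈ cycInt (x⁻¹ h') (y⁻¹ h') ↔ c₃ ∈ cycInt (x⁻¹ h') (y⁻¹ h') := by
      rw [mem_cycInt, mem_cycInt]; split_ifs <;> omega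
    have := hrows c₂; have := hrows c₃; tauto
  · have hcol : c₂ ∈ cycInt (y⁻¹ h') (x⁻¹ h') ↔ c₃ ∈ cycInt (y⁻¹ h') (x⁻¹ h') := by
      rw [mem_cycInt, mem_cycInt]; split_ifs <;> omega
    have := hrows c₂; have := hrows c₃; tauto

theorem countO_minus_ne_zero (hs : OSwapAt Gp Gm h h' c₂ c₃) {x y : Perm (Fin m)}
    (hx : ¬Pinched h' c₂ c₃ x) (hy : Pinched h' c₂ c₃ y) {r : Finset (Fin m × Fin m)}
    (hr : r ∈ Rect x y) : countO Gm r ≠ 0 := by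
  unfold Pinched at hx hy
  have := hs.lt
  rcases Rect.rows hs.succ_row hr with ⟨hyx, -⟩ | hrows | hrows
  · exact (hx (hyx ▸ hy)).elim
  · have hcol : c₂ ∈ cycInt (x⁻¹ h') (y⁻¹ h') := by rw [mem_cycInt]; split_ifs <;> omega
    exact countO_ne_zero_of_mem (by rw [hs.σO_minus_c₂]; exact ((hrows c₂).2).2 hcol)
  · have hcol : c₃ ∈ cycInt (y⁻¹ h') (x⁻¹ h') := by rw [mem_cycInt]; split_ifs <;> omega
    exact countO_ne_zero_of_mem (by rw [hs.σO_minus_c₃]; exact ((hrows c₃).2).2 hcol)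

theorem countO_plus_ne_zero (hs : OSwapAt Gp Gm h h' c₂ c₃) {x y : Perm (Fin m)}
    (hx : Pinched h' c₂ c₃ x) (hy : ¬Pinched h' c₂ c₃ y) {r : Finset (Fin m × Fin m)}
    (hr : r ∈ Rect x y) : countO Gp r ≠ 0 := by
  unfold Pinched at hx hy
  have := hs.lt
  rcases Rect.rows hs.succ_row hr with ⟨hyx, -⟩ | hrows | hrows
  · exact (hy (hyx ▸ hx)).elim
  · have hcol : c₃ ∈ cycInt (x⁻¹ h') (y⁻¹ h') := by rw [mem_cycInt]; split_ifs <;> omega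
    exact countO_ne_zero_of_mem (by rw [hs.σO_plus_c₃]; exact ((hrows c₃).2).2 hcol)
  · have hcol : c₂ ∈ cycInt (y⁻¹ h') (x⁻¹ h') := by rw [mem_cycInt]; split_ifs <;> omega
    exact countO_ne_zero_of_mem (by rw [hs.σO_plus_c₂]; exact ((hrows c₂).2).2 hcol)

theorem killStates_comp_delta (hs : OSwapAt Gp Gm h h' c₂ c₃) :
    (killStates (Pinched h' c₂ c₃)).comp (delta Gp) =
      (delta Gm).comp (killStates (Pinched h' c₂ c₃)) :=
  Grid.killStates_comp_delta _
    (fun _ _ hx hy => by rw [countDRect_congr fun _ => hs.countO_plus_eq_zero_iff hx hy])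
    (fun _ _ hx hy => by
      rw [countDRect_eq_zero fun _ => hs.countO_minus_ne_zero hx hy, Nat.cast_zero])
    (fun _ _ hx hy => by
      rw [countDRect_eq_zero fun _ => hs.countO_plus_ne_zero hx hy, Nat.cast_zero])

theorem Jcount_ptSet_Omark_plus (hs : OSwapAt Gp Gm h h' c₂ c₃) (x : Perm (Fin m)) :
    Jcount (ptSet x) (Omark Gp) =
      Jcount (ptSet x) (Omark Gm) + if Pinched h' c₂ c₃ x then 1 else 0 := by
  have hσ : ∀ c, c ≠ c₂ ∧ c ≠ c₃ → oWeight x c (Gp.σO c) - oWeight x c (Gm.σO c) = 0 :=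
    fun c hc => by rw [hs.σO_plus, Perm.mul_apply, swap_apply_of_ne_of_ne hc.1 hc.2, sub_self]
  have hdiff : 2 * Jcount (ptSet x) (Omark Gp) - 2 * Jcount (ptSet x) (Omark Gm) =
      (oWeight x c₃ h' - oWeight x c₃ h) - (oWeight x c₂ h' - oWeight x c₂ h) := by
    rw [Grid.two_mul_Jcount_ptSet_Omark, Grid.two_mul_Jcount_ptSet_Omark, ← sum_sub_distrib,
      Fintype.sum_eq_add c₂ c₃ hs.lt.ne hσ, hs.σO_plus_c₂, hs.σO_plus_c₃, hs.σO_minus_c₂,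
      hs.σO_minus_c₃]
    ring
  rw [oWeight_sub_of_val_eq_succ hs.succ_row, oWeight_sub_of_val_eq_succ hs.succ_row] at hdiff
  have hpinch : ((if x⁻¹ h' ≤ c₃ then 1 else 0) - (if c₃ < x⁻¹ h' then 1 else 0)) -
      ((if x⁻¹ h' ≤ c₂ then 1 else 0) - (if c₂ < x⁻¹ h' then 1 else 0)) =
      (2 : ℚ) * if Pinched h' c₂ c₃ x then 1 else 0 := by
    have := hs.lt
    by_cases hP : Pinched h' c₂ c₃ x
    · rw [if_pos hP]
      obtain ⟨h₂, h₃⟩ := hP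
      split_ifs <;> norm_num <;> omega
    · rw [if_neg hP]
      unfold Pinched at hP
      split_ifs <;> norm_num <;> omega
  linarith

theorem MaslovO_plus (hs : OSwapAt Gp Gm h h' c₂ c₃) (x : Perm (Fin m)) :
    MaslovO Gp x = MaslovO Gm x + 1 - 2 * if Pinched h' c₂ c₃ x then 1 else 0 := by
  have hnotMem :
      (c₂, c₃) ∉ univ.filter fun p : Fin m × Fin m => p.1 < p.2 ∧ Gm.σO p.1 < Gm.σO p.2 := by
    simp only [mem_filter, mem_univ, true_and, hs.σO_minus_c₂, hs.σO_minus_c₃, not_and, not_lt]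
    exact fun _ => by have := hs.succ_row; omega
  have hOO : Jcount (Omark Gp) (Omark Gp) = Jcount (Omark Gm) (Omark Gm) + 1 := by
    rw [Jcount_Omark_self, Jcount_Omark_self, hs.σO_plus,
      Perm.filter_lt_mul_swap hs.lt (by rw [hs.σO_minus_c₂, hs.σO_minus_c₃]; exact hs.succ_row),
      card_insert_of_notMem hnotMem, Nat.cast_succ]
  rw [MaslovO, MaslovO, hs.Jcount_ptSet_Omark_plus, hOO]
  ring

theorem Alex_minus (hs : OSwapAt Gp Gm h h' c₂ c₃) {x : Perm (Fin m)}
    (hx : ¬Pinched h' c₂ c₃ x) :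
    Alex Gm x = Alex Gp x - ((numComp Gp : ℚ) - numComp Gm + 1) / 2 := by
  have hX : MaslovX Gp x = MaslovX Gm x := by simp only [MaslovX, Xmark, hs.σX_plus]
  rw [Alex, Alex, hs.MaslovO_plus, if_neg hx, hX]
  ring

theorem numComp_plus (hs : OSwapAt Gp Gm h h' c₂ c₃) :
    numComp Gp = numComp Gm + 1 ∨ numComp Gm = numComp Gp + 1 := by
  have hfree : ∀ (G : GridDiagram m) z, (G.σX⁻¹ * G.σO) z ≠ z :=
    fun G z hz => G.ne z (Perm.inv_eq_iff_eq.1 hz)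
  have hrel : Gp.σX⁻¹ * Gp.σO = Gm.σX⁻¹ * Gm.σO * swap c₂ c₃ := by
    rw [hs.σX_plus, hs.σO_plus, mul_assoc]
  rw [numComp, numComp, hrel]
  exact Perm.card_cycleType_mul_swap hs.lt.ne (hfree Gm) (hrel ▸ hfree Gp)

theorem shift_eq_zero_or_one (hs : OSwapAt Gp Gm h h' c₂ c₃) :
    ((numComp Gp : ℚ) - numComp Gm + 1) / 2 = 0 ∨
      ((numComp Gp : ℚ) - numComp Gm + 1) / 2 = 1 := by
  rcases hs.numComp_plus with h | h <;> rw [h] <;> push_cast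
  · exact Or.inr (by ring)
  · exact Or.inl (by ring)

theorem not_pinched_xminus (hs : OSwapAt Gp Gm h h' c₂ c₃) {c₁ : Fin m} (h₁₂ : c₁ < c₂)
    (hX₁ : Gm.σX c₁ = h') : ¬Pinched h' c₂ c₃ (xminus Gp) := by
  have : (xminus Gp)⁻¹ h' = c₁ := Perm.inv_eq_iff_eq.2 (by rw [xminus, hs.σX_plus, hX₁])
  rw [Pinched, this]
  omega

theorem not_pinched_xplus (hs : OSwapAt Gp Gm h h' c₂ c₃) {c₄ : Fin m} (h₃₄ : c₃ < c₄)
    (hX₄ : Gm.σX c₄ = h) : ¬Pinched h' c₂ c₃ (xplus Gp) := by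
  obtain ⟨n, rfl⟩ : ∃ n, m = n + 1 := ⟨m - 1, by have := c₂.pos; omega⟩
  have hh : finRotate (n + 1) h = h' := by
    have hrow := hs.succ_row
    ext
    rw [coe_finRotate, if_neg (fun e => by rw [e, Fin.val_last] at hrow; omega), hrow]
  have : (xplus Gp)⁻¹ h' = finRotate (n + 1) c₄ :=
    Perm.inv_eq_iff_eq.2 (by simp [xplus, hs.σX_plus, hX₄, hh])
  have hrot := coe_finRotate c₄
  rw [Pinched, this, Fin.le_def, Fin.lt_def, hrot]
  split_ifs <;> omega

end OSwapAt

end Grid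

open Grid in
/-- If `𝔾₊` is obtained from `𝔾₋` by an O swap, then there is
an `F₂`-linear chain map `𝒫_O : 𝒢̃C(𝔾₊) → 𝒢̃C(𝔾₋)`, homogeneous of Maslov
degree `−1`, with `𝒫_O(F_j) ⊆ F_{j−s}` for all `j`, where
`s = (ℓ(𝔾₊) − ℓ(𝔾₋) + 1)/2 ∈ {0, 1}`, and `𝒫_O(x^±(𝔾₊)) = x^±(𝔾₋)`. -/
theorem statement15 {m : ℕ} (Gp Gm : GridDiagram m) (h : OSwap Gp Gm) :
    (((numComp Gp : ℚ) - (numComp Gm : ℚ) + 1) / 2 = 0 ∨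
      ((numComp Gp : ℚ) - (numComp Gm : ℚ) + 1) / 2 = 1) ∧
    ∃ P : GC m →ₗ[ZMod 2] GC m,
      P.comp (delta Gp) = (delta Gm).comp P ∧
      (∀ d : ℚ, (MaslovPart Gp d).map P ≤ MaslovPart Gm (d - 1)) ∧
      (∀ j : ℚ, (Filt Gp j).map P ≤
        Filt Gm (j - ((numComp Gp : ℚ) - (numComp Gm : ℚ) + 1) / 2)) ∧
      P (Finsupp.single (xplus Gp) 1) = Finsupp.single (xplus Gm) 1 ∧
      P (Finsupp.single (xminus Gp) 1) = Finsupp.single (xminus Gm) 1 := by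
  obtain ⟨h, h', c₁, c₂, c₃, c₄, hrow, h₁₂, h₂₃, h₃₄, -, hX, hX₁, hX₄, hO₂, hO₃, hO⟩ := h
  have hs : OSwapAt Gp Gm h h' c₂ c₃ := ⟨hrow, h₂₃, hO₂, hO₃, hO, hX⟩
  refine ⟨hs.shift_eq_zero_or_one, killStates (Pinched h' c₂ c₃), hs.killStates_comp_delta,
    fun d => map_killStates_span_le _ fun x hx hd => ?_,
    fun j => map_killStates_span_le _ fun x hx hj => ?_, ?_, ?_⟩
  · rw [hs.MaslovO_plus, if_neg hx] at hd
    linarith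
  · rw [hs.Alex_minus hx]
    linarith
  · rw [killStates_single, if_neg (hs.not_pinched_xplus h₃₄ hX₄), xplus, xplus, hX]
  · rw [killStates_single, if_neg (hs.not_pinched_xminus h₁₂ hX₁), xminus, xminus, hX]
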